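/- Let F be a field, n a natural number, and r : Fin n → Fin n → Prop a reflexive, transitive, antisymmetric relation such that r i j implies i ≤ j. Let S be the set of matrices M : Matrix (Fin n) (Fin n) F with M i j = 0 whenever ¬ r i j. Let e : Fin s → Matrix (Fin n) (Fin n) F be such that each e k ∈ S, each e k is idempotent (e k * e k = e k), and e k * e l = 0 for k ≠ l. Then there exist matrices M, N ∈ S with M*N = 1 and N*M = 1 such that N * (e k) * M is a diagonal matrix (Matrix.IsDiag) for every k. -/

import Mathlib

/-!
Put `g = 1 - ∑ₖ eₖ`, so that `g, e₁, …, eₛ` is a complete family of orthogonal idempotents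
of the incidence algebra `S`, and let `ψ : S → S` keep only the diagonal. Since `S` consists of
upper triangular matrices, `ψ` is a ring endomorphism whose kernel is nil, so the `ψ`-images
of the family are again complete orthogonal idempotents. The element `u = ∑ₗ eₗ ψ(eₗ)` then
satisfies `eₖ u = eₖ ψ(eₖ) = u ψ(eₖ)`, and `ψ(u) = ∑ₗ ψ(eₗ) = 1`, so `u - 1` is nilpotent and
`u` is a unit of `S` with `u⁻¹ eₖ u = ψ(eₖ)` diagonal.
-/

section Idempotents

variable {A : Type*} {I : Type*} [Fintype I]

theorem OrthogonalIdempotents.mul_sum_mul_eq_sum_mul_mul [Semiring A] [DecidableEq I]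
    {e d : I → A} (he : OrthogonalIdempotents e) (hd : OrthogonalIdempotents d) (k : I) :
    e k * ∑ l, e l * d l = (∑ l, e l * d l) * d k := by
  have hleft : e k * ∑ l, e l * d l = e k * d k := by
    simp [Finset.mul_sum, ← mul_assoc, he.mul_eq]
  have hright : (∑ l, e l * d l) * d k = e k * d k := by
    simp [Finset.sum_mul, mul_assoc, hd.mul_eq]
  rw [hleft, hright]

theorem CompleteOrthogonalIdempotents.exists_units_inv_mul_mul_eq [Ring A] {e : I → A}
    (he : CompleteOrthogonalIdempotents e) (ψ : A →+* A) (hψ : ∀ x, ψ (ψ x) = ψ x)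
    (hker : ∀ x ∈ RingHom.ker ψ, IsNilpotent x) :
    ∃ u : Aˣ, ∀ k, ↑u⁻¹ * e k * u = ψ (e k) := by
  classical
  have hd : CompleteOrthogonalIdempotents (ψ ∘ e) := he.map ψ
  set u := ∑ l, e l * ψ (e l)
  have hconj (k : I) : e k * u = u * ψ (e k) :=
    he.mul_sum_mul_eq_sum_mul_mul hd.toOrthogonalIdempotents k
  have hψu : ψ u = 1 := by
    simp only [u, map_sum, map_mul, hψ, ((he.idem _).map ψ).eq]
    exact hd.complete
  have hunit : IsUnit u := by
    have hnil : IsNilpotent (u - 1) := hker _ (by simp [RingHom.mem_ker, hψu])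
    simpa using hnil.isUnit_one_add
  refine ⟨hunit.unit, fun k => ?_⟩
  rw [mul_assoc, IsUnit.unit_spec, hconj, ← mul_assoc, hunit.val_inv_mul, one_mul]

end Idempotents

namespace Matrix

section Triangular

variable {m R : Type*} [Fintype m] [LinearOrder m]

theorem IsUpperTriangular.diag_mul [NonUnitalNonAssocSemiring R] {M N : Matrix m m R}
    (hM : M.IsUpperTriangular) (hN : N.IsUpperTriangular) :
    (M * N).diag = M.diag * N.diag := by
  ext i
  refine Fintype.sum_eq_single i fun k hk => ?_
  rcases lt_or_gt_of_ne hk with h | h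
  · simp [hM h]
  · simp [hN h]

open Polynomial in
theorem IsUpperTriangular.isNilpotent_of_diag_eq_zero [DecidableEq m] [CommRing R]
    {M : Matrix m m R} (hM : M.IsUpperTriangular) (hdiag : M.diag = 0) : IsNilpotent M := by
  have hchar : M.charpoly = X ^ Fintype.card m := by
    simp [charpoly_of_isUpperTriangular M hM, show ∀ i, M i i = 0 from congrFun hdiag]
  exact ⟨Fintype.card m, by simpa [hchar] using M.aeval_self_charpoly⟩

end Triangular

variable {ι : Type*} [Fintype ι] [DecidableEq ι] {r : ι → ι → Prop}

section CommSemiring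

variable {R : Type*} [CommSemiring R]

variable (R) in
def incidenceSubalgebra (hrefl : ∀ i, r i i) (htrans : ∀ i j k, r i j → r j k → r i k) :
    Subalgebra R (Matrix ι ι R) where
  carrier := {M | ∀ i j, ¬ r i j → M i j = 0}
  mul_mem' {M N} hM hN i j hij := Finset.sum_eq_zero fun k _ => by
    by_cases hik : r i k
    · simp [hN k j fun hkj => hij (htrans i k j hik hkj)]
    · simp [hM i k hik]
  add_mem' hM hN i j hij := by simp [hM i j hij, hN i j hij]
  algebraMap_mem' _ i j hij := diagonal_apply_ne _ fun h => hij (h ▸ hrefl i)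

variable {hrefl : ∀ i, r i i} {htrans : ∀ i j k, r i j → r j k → r i k}

theorem mem_incidenceSubalgebra {M : Matrix ι ι R} :
    M ∈ incidenceSubalgebra R hrefl htrans ↔ ∀ i j, ¬ r i j → M i j = 0 :=
  Iff.rfl

theorem diagonal_mem_incidenceSubalgebra (d : ι → R) :
    diagonal d ∈ incidenceSubalgebra R hrefl htrans :=
  fun i _ hij => diagonal_apply_ne _ fun h => hij (h ▸ hrefl i)

variable [LinearOrder ι]

theorem isUpperTriangular_of_mem_incidenceSubalgebra (hle : ∀ i j, r i j → i ≤ j)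
    {M : Matrix ι ι R} (hM : M ∈ incidenceSubalgebra R hrefl htrans) : M.IsUpperTriangular :=
  fun i j hji => hM i j fun hij => (hle i j hij).not_gt hji

def incidenceDiag (hle : ∀ i j, r i j → i ≤ j) :
    incidenceSubalgebra R hrefl htrans →+* (ι → R) where
  toFun M := M.1.diag
  map_one' := diag_one
  map_mul' M N := (isUpperTriangular_of_mem_incidenceSubalgebra hle M.2).diag_mul
    (isUpperTriangular_of_mem_incidenceSubalgebra hle N.2)
  map_zero' := diag_zero
  map_add' M N := diag_add M.1 N.1

def incidenceDiagonalPart (hle : ∀ i j, r i j → i ≤ j) :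
    incidenceSubalgebra R hrefl htrans →+* incidenceSubalgebra R hrefl htrans :=
  ((diagonalRingHom ι R).codRestrict _ diagonal_mem_incidenceSubalgebra).comp (incidenceDiag hle)

theorem coe_incidenceDiagonalPart (hle : ∀ i j, r i j → i ≤ j)
    (M : incidenceSubalgebra R hrefl htrans) :
    (incidenceDiagonalPart hle M : Matrix ι ι R) = diagonal M.1.diag :=
  rfl

theorem incidenceDiagonalPart_idem (hle : ∀ i j, r i j → i ≤ j)
    (M : incidenceSubalgebra R hrefl htrans) :
    incidenceDiagonalPart hle (incidenceDiagonalPart hle M) = incidenceDiagonalPart hle M :=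
  Subtype.ext <| by simp [coe_incidenceDiagonalPart]

end CommSemiring

variable [LinearOrder ι] {R : Type*} [CommRing R]
  {hrefl : ∀ i, r i i} {htrans : ∀ i j k, r i j → r j k → r i k}

theorem isNilpotent_of_mem_ker_incidenceDiagonalPart (hle : ∀ i j, r i j → i ≤ j)
    (M : incidenceSubalgebra R hrefl htrans) (hM : M ∈ RingHom.ker (incidenceDiagonalPart hle)) :
    IsNilpotent M := by
  have hdiag : M.1.diag = 0 :=
    funext (by simpa [← diagonal_zero, coe_incidenceDiagonalPart] using congrArg Subtype.val hM)
  rw [← IsNilpotent.map_iff (f := (incidenceSubalgebra R hrefl htrans).val) Subtype.val_injective]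
  exact (isUpperTriangular_of_mem_incidenceSubalgebra hle M.2).isNilpotent_of_diag_eq_zero hdiag

end Matrix

open Matrix in
theorem orthogonal_idempotents_simultaneously_diagonalizable_general
    {F : Type*} [Field F] {n s : ℕ} (r : Fin n → Fin n → Prop)
    (hrefl : ∀ i, r i i)
    (htrans : ∀ i j k, r i j → r j k → r i k)
    (hle : ∀ i j, r i j → i ≤ j)
    (e : Fin s → Matrix (Fin n) (Fin n) F)
    (he_mem : ∀ k, ∀ i j, ¬ r i j → e k i j = 0)
    (he_idem : ∀ k, e k * e k = e k)
    (he_orth : ∀ k l, k ≠ l → e k * e l = 0) :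
    ∃ M N : Matrix (Fin n) (Fin n) F,
      (∀ i j, ¬ r i j → M i j = 0) ∧ (∀ i j, ¬ r i j → N i j = 0) ∧
      M * N = 1 ∧ N * M = 1 ∧ ∀ k, (N * e k * M).IsDiag := by
  let S := incidenceSubalgebra F hrefl htrans
  let e' : Fin s → S := fun k => ⟨e k, he_mem k⟩
  have he' : OrthogonalIdempotents e' :=
    (OrthogonalIdempotents.map_injective_iff S.val.toRingHom Subtype.val_injective).mp
      ⟨he_idem, fun k l hkl => he_orth k l hkl⟩
  obtain ⟨u, hu⟩ := (CompleteOrthogonalIdempotents.option he').exists_units_inv_mul_mul_eq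
    (incidenceDiagonalPart hle) (incidenceDiagonalPart_idem hle)
    (isNilpotent_of_mem_ker_incidenceDiagonalPart hle)
  refine ⟨(u : S), (↑u⁻¹ : S), mem_incidenceSubalgebra.mp (u : S).2,
    mem_incidenceSubalgebra.mp (↑u⁻¹ : S).2, congrArg Subtype.val u.mul_inv,
    congrArg Subtype.val u.inv_mul, fun k => ?_⟩
  have hk : ((↑u⁻¹ : S) : Matrix (Fin n) (Fin n) F) * e k * (u : S) = diagonal (e k).diag :=
    congrArg Subtype.val (hu (some k))
  rw [hk]
  exact isDiag_diagonal _

/-- A family of pairwise orthogonal idempotents in the matrix realization of a finite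
incidence algebra can be simultaneously diagonalized by a conjugation inside the algebra. -/
theorem orthogonal_idempotents_simultaneously_diagonalizable
    {F : Type*} [Field F] {n s : ℕ} (r : Fin n → Fin n → Prop)
    (hrefl : ∀ i, r i i)
    (htrans : ∀ i j k, r i j → r j k → r i k)
    (hantisymm : ∀ i j, r i j → r j i → i = j)
    (hle : ∀ i j, r i j → i ≤ j)
    (e : Fin s → Matrix (Fin n) (Fin n) F)
    (he_mem : ∀ k, ∀ i j, ¬ r i j → e k i j = 0)
    (he_idem : ∀ k, e k * e k = e k)
    (he_orth : ∀ k l, k ≠ l → e k * e l = 0) :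
    ∃ M N : Matrix (Fin n) (Fin n) F,
      (∀ i j, ¬ r i j → M i j = 0) ∧ (∀ i j, ¬ r i j → N i j = 0) ∧
      M * N = 1 ∧ N * M = 1 ∧ ∀ k, (N * e k * M).IsDiag :=
  orthogonal_idempotents_simultaneously_diagonalizable_general r hrefl htrans hle e he_mem he_idem
    he_orth
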